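/- arXiv:1110.6759 — 4 statements merged into one kernel-verified Lean document; each statement's English description precedes it below -/
import Mathlib

section
/- The infinite series ∑_{k=0}^∞ k!/(2k+1)!! converges to π/2, where (2k+1)!! denotes the double factorial 1·3·5···(2k+1). -/
/-! Substituting `u = cos x` in Wallis' integral `∫₀^π sin^(2k+1) x dx = 2^(k+1) k! / (2k+1)!!`
gives `k! / (2k+1)!! = ∫₋₁¹ ((1 - u²)/2)^k / 2 du`. The integrands form a geometric series with
ratio in `[0, 1/2]`, so the series may be summed under the integral, and its sum `1 / (1 + u²)`
integrates to `arctan 1 - arctan (-1) = π/2`. -/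

open Filter Finset Real Set Interval MeasureTheory

open Nat in
theorem prod_range_even_div_odd (k : ℕ) :
    ∏ i ∈ range k, (2 * (i : ℝ) + 2) / (2 * i + 3) = 2 ^ k * (k ! : ℝ) / ((2 * k + 1)‼ : ℕ) := by
  rw [prod_div_distrib, ← Nat.cast_ofNat, ← Nat.cast_pow, ← Nat.cast_mul,
    ← doubleFactorial_two_mul, doubleFactorial_eq_prod_even, doubleFactorial_eq_prod_odd]
  push_cast
  congr 1 <;> exact prod_congr rfl fun i _ => by ring

open Nat in
theorem integral_one_sub_sq_pow (k : ℕ) :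
    ∫ u in (-1)..1, (1 - u ^ 2) ^ k = 2 ^ (k + 1) * (k ! : ℝ) / ((2 * k + 1)‼ : ℕ) := by
  have h := integral_sin_pow_odd_mul_cos_pow (a := 0) (b := π) k 0
  simp only [pow_zero, mul_one, one_mul, cos_pi, cos_zero] at h
  rw [← h, integral_sin_pow_odd, prod_range_even_div_odd]
  ring

theorem hasSum_integral_geometric_one_sub_sq :
    HasSum (fun k : ℕ => ∫ u in (-1)..1, ((1 - u ^ 2) / 2) ^ k / 2)
      (∫ u in (-1)..1, 1 / (1 + u ^ 2)) := by
  have ratio_mem {u : ℝ} (hu : u ∈ Ι (-1) 1) : 0 ≤ (1 - u ^ 2) / 2 ∧ (1 - u ^ 2) / 2 ≤ 1 / 2 := by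
    rw [uIoc_of_le (by norm_num)] at hu
    constructor <;> nlinarith [hu.1, hu.2]
  refine intervalIntegral.hasSum_integral_of_dominated_convergence (fun k _ => (1 / 2) ^ k / 2)
    (fun k => by fun_prop) (fun k => ae_of_all _ fun u hu => ?_)
    (ae_of_all _ fun _ _ => summable_geometric_two.div_const 2) intervalIntegrable_const
    (ae_of_all _ fun u hu => ?_)
  · obtain ⟨h0, h1⟩ := ratio_mem hu
    rw [Real.norm_of_nonneg (by positivity)]
    gcongr
  · obtain ⟨h0, h1⟩ := ratio_mem hu
    have h := (hasSum_geometric_of_lt_one h0 (by linarith)).div_const 2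
    rwa [show 1 - (1 - u ^ 2) / 2 = (1 + u ^ 2) / 2 by ring, inv_div,
      show 2 / (1 + u ^ 2) / 2 = 1 / (1 + u ^ 2) by ring] at h

theorem stmt0 :
    Tendsto (fun N => ∑ k ∈ range N,
      (Nat.factorial k : ℝ) / (Nat.doubleFactorial (2 * k + 1) : ℝ))
      atTop (nhds (Real.pi / 2)) := by
  have term_eq (k : ℕ) : (Nat.factorial k : ℝ) / (Nat.doubleFactorial (2 * k + 1) : ℝ)
      = ∫ u in (-1)..1, ((1 - u ^ 2) / 2) ^ k / 2 := by
    simp only [div_pow, intervalIntegral.integral_div]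
    rw [integral_one_sub_sq_pow]
    field_simp
    ring
  have integral_eq : ∫ u in (-1)..1, 1 / (1 + u ^ 2) = π / 2 := by
    rw [integral_one_div_one_add_sq, arctan_neg, arctan_one]
    ring
  rw [funext term_eq, ← integral_eq]
  exact hasSum_integral_geometric_one_sub_sq.tendsto_sum_nat
end

section
/- The infinite series ∑_{k=0}^∞ (k!)²/(2k+1)! converges to 2π/(3√3). -/
/-!
The summand is a Beta value, `(k!)² / (2k+1)! = ∫₀¹ (x(1-x))ᵏ dx`. Since `0 ≤ x(1-x) ≤ 1/4` on
`[0, 1]`, the geometric series may be summed under the integral, giving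
`∫₀¹ dx / (1 - x + x²)`, which completing the square turns into an arctangent integral.
-/

open Filter Finset Real
open scoped Nat

theorem integral_pow_mul_one_sub_pow (m n : ℕ) :
    ∫ x in (0:ℝ)..1, x ^ m * (1 - x) ^ n = (m ! * n ! / (m + n + 1)! : ℝ) := by
  have hu : 0 < ((m : ℂ) + 1).re := by simp; positivity
  have hreal : Complex.betaIntegral (m + 1) (n + 1) =
      ((∫ x in (0:ℝ)..1, x ^ m * (1 - x) ^ n : ℝ) : ℂ) := by
    rw [Complex.betaIntegral, ← intervalIntegral.integral_ofReal]
    refine intervalIntegral.integral_congr fun x _ => ?_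
    simp only [add_sub_cancel_right, Complex.cpow_natCast]
    push_cast
    rfl
  have hprod : ∏ j ∈ range (n + 1), ((m : ℂ) + 1 + j) = ((m + 1).ascFactorial (n + 1) : ℂ) := by
    rw [Nat.ascFactorial_eq_prod_range]
    push_cast
    rfl
  have hfac : (m + n + 1)! = m ! * (m + 1).ascFactorial (n + 1) := by
    rw [Nat.factorial_mul_ascFactorial, add_assoc]
  apply Complex.ofReal_injective
  rw [← hreal, Complex.betaIntegral_eval_nat_add_one_right hu n, hprod, hfac]
  push_cast
  rw [mul_div_mul_left _ _ (by exact_mod_cast m.factorial_ne_zero)]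

open MeasureTheory in
theorem hasSum_intervalIntegral_pow {f : ℝ → ℝ} {a b r : ℝ}
    (hf : AEStronglyMeasurable f (volume.restrict (Set.uIoc a b))) (hr : r < 1)
    (hfr : ∀ x ∈ Set.uIoc a b, |f x| ≤ r) :
    HasSum (fun k => ∫ x in a..b, f x ^ k) (∫ x in a..b, (1 - f x)⁻¹) :=
  intervalIntegral.hasSum_integral_of_dominated_convergence (fun k _ => r ^ k)
    (fun k => hf.pow k)
    (fun k => ae_of_all _ fun x hx => by
      rw [norm_pow, Real.norm_eq_abs]
      exact pow_le_pow_left₀ (abs_nonneg _) (hfr x hx) k)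
    (ae_of_all _ fun x hx => summable_geometric_of_lt_one ((abs_nonneg _).trans (hfr x hx)) hr)
    intervalIntegrable_const
    (ae_of_all _ fun x hx => hasSum_geometric_of_abs_lt_one ((hfr x hx).trans_lt hr))

theorem abs_mul_one_sub_le {x : ℝ} (h0 : 0 ≤ x) (h1 : x ≤ 1) : |x * (1 - x)| ≤ 1 / 4 := by
  rw [abs_of_nonneg (mul_nonneg h0 (sub_nonneg.2 h1))]
  nlinarith [sq_nonneg (x - 1 / 2)]

theorem integral_inv_one_sub_mul_one_sub :
    ∫ x in (0:ℝ)..1, (1 - x * (1 - x))⁻¹ = 2 * π / (3 * √3) := by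
  have hsq : √3 ^ 2 = 3 := sq_sqrt (by norm_num)
  have hfun (x : ℝ) : (1 - x * (1 - x))⁻¹ = 4 / 3 * (1 + (2 / √3 * x - 1 / √3) ^ 2)⁻¹ := by
    have hpos : 0 < 1 - x * (1 - x) := by nlinarith [sq_nonneg (x - 1 / 2)]
    field_simp
    rw [hsq]
    ring
  simp_rw [hfun]
  rw [intervalIntegral.integral_const_mul,
    intervalIntegral.integral_comp_mul_sub (fun u => (1 + u ^ 2)⁻¹) (by positivity),
    integral_inv_one_add_sq]
  have h1 : 2 / √3 * 1 - 1 / √3 = (√3)⁻¹ := by ring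
  have h0 : 2 / √3 * 0 - 1 / √3 = -(√3)⁻¹ := by ring
  rw [h1, h0, arctan_neg, arctan_inv_sqrt_three, smul_eq_mul]
  field_simp
  linear_combination 8 * hsq

theorem stmt1 :
    Tendsto (fun N => ∑ k ∈ range N,
      ((Nat.factorial k : ℝ))^2 / (Nat.factorial (2 * k + 1) : ℝ))
      atTop (nhds (2 * Real.pi / (3 * Real.sqrt 3))) := by
  have hbound : ∀ x ∈ Set.uIoc (0:ℝ) 1, |x * (1 - x)| ≤ 1 / 4 := fun x hx => by
    rw [Set.uIoc_of_le zero_le_one] at hx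
    exact abs_mul_one_sub_le hx.1.le hx.2
  have hsum := hasSum_intervalIntegral_pow (by fun_prop) (by norm_num) hbound
  simp only [mul_pow, integral_pow_mul_one_sub_pow, integral_inv_one_sub_mul_one_sub,
    ← two_mul, ← sq] at hsum
  exact hsum.tendsto_sum_nat
end

section
/- The infinite series ∑_{k=2}^∞ (k+2)!/(2k+1)!! converges to 3π/2. -/
open Filter Finset Real Nat MeasureTheory

/-!
Wallis' integral `∫₀^π sin^(2k+1) = 2 · 2^k k! / (2k+1)‼` writes the `k`-th term as
`∫₀^π C(k+2,2) sin θ (sin² θ / 2)^k dθ`. The integrands are nonnegative, so the series may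
be summed under the integral (dominated by itself), and `∑ C(k+2,2) x^k = (1-x)⁻³` together
with `1 - sin² θ / 2 = (1 + cos² θ) / 2` gives, for the series started at `k = 0`,
`∫₀^π 8 sin θ / (1 + cos² θ)³ dθ = 8 ∫₋₁¹ du / (1 + u²)³ = 3π/2 + 4`.
The terms `k = 0, 1` contribute `2 + 2`.
-/

theorem prod_range_two_mul_add_two_div_two_mul_add_three (k : ℕ) :
    ∏ i ∈ range k, (2 * (i : ℝ) + 2) / (2 * i + 3) = 2 ^ k * k ! / (2 * k + 1)‼ := by
  induction k with
  | zero => simp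
  | succ k ih =>
    rw [prod_range_succ, ih, show 2 * (k + 1) + 1 = 2 * k + 1 + 2 by ring,
      doubleFactorial_add_two, factorial_succ]
    have : ((2 * k + 1)‼ : ℝ) ≠ 0 := by positivity
    push_cast
    field_simp
    ring

theorem integral_sin_mul_sin_sq_div_two_pow (k : ℕ) :
    ∫ θ in 0..π, sin θ * (sin θ ^ 2 / 2) ^ k = 2 * (k ! : ℝ) / (2 * k + 1)‼ := by
  have hpow : ∀ θ, sin θ * (sin θ ^ 2 / 2) ^ k = sin θ ^ (2 * k + 1) / 2 ^ k := fun θ => by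
    rw [div_pow, ← pow_mul]; ring
  simp_rw [hpow, intervalIntegral.integral_div, integral_sin_pow_odd,
    prod_range_two_mul_add_two_div_two_mul_add_three]
  field_simp

theorem factorial_add_two_div_doubleFactorial_eq_integral (k : ℕ) :
    ((k + 2)! : ℝ) / (2 * k + 1)‼
      = ∫ θ in 0..π, ((k + 2).choose 2 : ℝ) * (sin θ * (sin θ ^ 2 / 2) ^ k) := by
  rw [intervalIntegral.integral_const_mul, integral_sin_mul_sin_sq_div_two_pow,
    cast_choose_two, factorial_succ, factorial_succ]
  push_cast
  ring

theorem hasSum_choose_two_mul_sin_mul_sin_sq_div_two_pow (θ : ℝ) :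
    HasSum (fun k : ℕ => ((k + 2).choose 2 : ℝ) * (sin θ * (sin θ ^ 2 / 2) ^ k))
      (8 * sin θ / (1 + cos θ ^ 2) ^ 3) := by
  have hr : ‖sin θ ^ 2 / 2‖ < 1 := by
    rw [norm_div, norm_pow, Real.norm_eq_abs, sq_abs]
    norm_num
    nlinarith [sin_sq_le_one θ]
  have hsum :
      8 * sin θ / (1 + cos θ ^ 2) ^ 3 = sin θ * (1 / (1 - sin θ ^ 2 / 2) ^ (2 + 1)) := by
    rw [sin_sq, show 1 - (1 - cos θ ^ 2) / 2 = (1 + cos θ ^ 2) / 2 by ring]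
    field_simp
    ring
  rw [hsum]
  simpa only [mul_left_comm (sin θ)] using
    (hasSum_choose_mul_geometric_of_norm_lt_one 2 hr).mul_left (sin θ)

theorem hasDerivAt_primitive_eight_div_one_add_sq_pow_three (u : ℝ) :
    HasDerivAt (fun u => 3 * arctan u + 3 * u / (1 + u ^ 2) + 2 * u / (1 + u ^ 2) ^ 2)
      (8 / (1 + u ^ 2) ^ 3) u := by
  have h1 : (1 + u ^ 2) ≠ 0 := by positivity
  have hd : HasDerivAt (fun u : ℝ => 1 + u ^ 2) (2 * u) u := by
    simpa using ((hasDerivAt_id' u).pow 2).const_add 1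
  refine ((((hasDerivAt_arctan u).const_mul 3).add
    (((hasDerivAt_id' u).const_mul 3).fun_div hd h1)).add
    (((hasDerivAt_id' u).const_mul 2).fun_div (hd.fun_pow 2) (pow_ne_zero 2 h1))).congr_deriv ?_
  field_simp
  ring

theorem continuous_sin_div_one_add_cos_sq_pow_three :
    Continuous fun θ => 8 * sin θ / (1 + cos θ ^ 2) ^ 3 :=
  (continuous_const.mul continuous_sin).div (by fun_prop) fun θ => by positivity

theorem integral_sin_div_one_add_cos_sq_pow_three :
    ∫ θ in 0..π, 8 * sin θ / (1 + cos θ ^ 2) ^ 3 = 3 * π / 2 + 4 := by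
  set H : ℝ → ℝ := fun u => 3 * arctan u + 3 * u / (1 + u ^ 2) + 2 * u / (1 + u ^ 2) ^ 2
  have hderiv : ∀ θ, HasDerivAt (fun θ => -H (cos θ)) (8 * sin θ / (1 + cos θ ^ 2) ^ 3) θ :=
    fun θ => by
      refine ((hasDerivAt_primitive_eight_div_one_add_sq_pow_three (cos θ)).comp θ
        (hasDerivAt_cos θ)).neg.congr_deriv ?_
      ring
  rw [intervalIntegral.integral_eq_sub_of_hasDerivAt (fun θ _ => hderiv θ)
    (continuous_sin_div_one_add_cos_sq_pow_three.intervalIntegrable 0 π)]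
  simp only [H, cos_pi, cos_zero, arctan_one, arctan_neg]
  ring

theorem hasSum_factorial_add_two_div_doubleFactorial :
    HasSum (fun k : ℕ => ((k + 2)! : ℝ) / (2 * k + 1)‼) (3 * π / 2 + 4) := by
  simp_rw [factorial_add_two_div_doubleFactorial_eq_integral]
  rw [← integral_sin_div_one_add_cos_sq_pow_three]
  have hF_cont : ∀ k : ℕ, Continuous fun θ : ℝ =>
      ((k + 2).choose 2 : ℝ) * (sin θ * (sin θ ^ 2 / 2) ^ k) := by
    intro k; fun_prop
  have hF_nonneg : ∀ k : ℕ, ∀ θ ∈ Set.uIoc 0 π,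
      0 ≤ ((k + 2).choose 2 : ℝ) * (sin θ * (sin θ ^ 2 / 2) ^ k) := by
    intro k θ hθ
    rw [Set.uIoc_of_le pi_pos.le] at hθ
    have := sin_nonneg_of_nonneg_of_le_pi hθ.1.le hθ.2
    positivity
  have hF_sum := hasSum_choose_two_mul_sin_mul_sin_sq_div_two_pow
  refine intervalIntegral.hasSum_integral_of_dominated_convergence _
    (fun k => (hF_cont k).aestronglyMeasurable)
    (fun k => ae_of_all _ fun θ hθ => (norm_of_nonneg (hF_nonneg k θ hθ)).le)
    (ae_of_all _ fun θ _ => (hF_sum θ).summable) ?_ (ae_of_all _ fun θ _ => hF_sum θ)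
  simp_rw [(hF_sum _).tsum_eq]
  exact continuous_sin_div_one_add_cos_sq_pow_three.intervalIntegrable 0 π

theorem stmt3 :
    Tendsto (fun N => ∑ k ∈ Ico 2 N,
      (Nat.factorial (k + 2) : ℝ) / (Nat.doubleFactorial (2 * k + 1) : ℝ))
      atTop (nhds (3 * Real.pi / 2)) := by
  have h := hasSum_factorial_add_two_div_doubleFactorial.tendsto_sum_nat.sub_const 4
  rw [add_sub_cancel_right] at h
  refine h.congr' ?_
  filter_upwards [eventually_ge_atTop 2] with N hN
  rw [sum_Ico_eq_sub _ hN]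
  norm_num [sum_range_succ, factorial, doubleFactorial]
end

section
/- The infinite series ∑_{k=0}^∞ [(1)_k (1/3)_k (5/3)_k / ((3/2)_k (7/6)_k (11/6)_k)] · (3k+2)/4^k converges to 5π/(4√3). -/
/-!
With `W m = ∫₀¹ (1 - x²)^m`, integration by parts gives `(2m+3) W (m+1) = (2m+2) W m`, so
`W (3k)` is a ratio of Pochhammer symbols, and together with `3 + x⁴ = 4 - 2(1 - x²) + (1 - x²)²`
this turns the `k`-th term of the series into `5/8 ∫₀¹ (3 + x⁴) ((1 - x²)³/4)^k`. Summing the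
geometric series under the integral leaves `5/8 ∫₀¹ 4(3 + x⁴)/(4 - (1 - x²)³)`, and
`(4/√3) arctan ((3x - x³)/(√3 (1 - x²)))` is an antiderivative of the integrand on `(0, 1)`;
it vanishes at `0` and tends to `(4/√3)(π/2) = 2π/√3` as `x → 1⁻`.
-/

open Filter Finset Real

/-- Pochhammer symbol (rising factorial) for a real base and natural index. -/
noncomputable def poch (x : ℝ) (k : ℕ) : ℝ := ∏ i ∈ Finset.range k, (x + i)

open MeasureTheory Topology

lemma poch_succ (x : ℝ) (k : ℕ) : poch x (k + 1) = poch x k * (x + k) :=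
  prod_range_succ _ _

lemma mul_poch_add_one (x : ℝ) (k : ℕ) : x * poch (x + 1) k = poch x k * (x + k) := by
  rw [← poch_succ, poch, poch, prod_range_succ', mul_comm]
  push_cast
  simp only [add_zero, add_assoc, add_comm (1 : ℝ)]

lemma poch_pos {x : ℝ} (hx : 0 < x) (k : ℕ) : 0 < poch x k :=
  prod_pos fun i _ => by positivity

noncomputable def wallis (m : ℕ) : ℝ := ∫ x in (0 : ℝ)..1, (1 - x ^ 2) ^ m

lemma wallis_zero : wallis 0 = 1 := by simp [wallis]

lemma wallis_succ (m : ℕ) : (2 * m + 3) * wallis (m + 1) = (2 * m + 2) * wallis m := by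
  have hderiv : ∀ x ∈ Set.uIcc (0 : ℝ) 1, HasDerivAt (fun t : ℝ => t * (1 - t ^ 2) ^ (m + 1))
      ((2 * m + 3) * (1 - x ^ 2) ^ (m + 1) - (2 * m + 2) * (1 - x ^ 2) ^ m) x := by
    intro x _
    refine ((hasDerivAt_id' x).fun_mul
      (((hasDerivAt_pow 2 x).const_sub 1).fun_pow (m + 1))).congr_deriv ?_
    rw [Nat.add_sub_cancel, pow_succ]
    push_cast
    ring
  have h := intervalIntegral.integral_eq_sub_of_hasDerivAt hderiv
    (Continuous.intervalIntegrable (by fun_prop) _ _)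
  rw [intervalIntegral.integral_sub (Continuous.intervalIntegrable (by fun_prop) _ _)
      (Continuous.intervalIntegrable (by fun_prop) _ _),
    intervalIntegral.integral_const_mul, intervalIntegral.integral_const_mul] at h
  simp only [one_pow, sub_self, zero_pow (Nat.succ_ne_zero m), mul_zero, zero_mul] at h
  rw [wallis, wallis]
  linarith

lemma wallis_add_three (m : ℕ) :
    (2 * m + 3) * (2 * m + 5) * (2 * m + 7) * wallis (m + 3)
      = (2 * m + 2) * (2 * m + 4) * (2 * m + 6) * wallis m := by
  have h₀ := wallis_succ m
  have h₁ := wallis_succ (m + 1)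
  have h₂ := wallis_succ (m + 2)
  push_cast at h₁ h₂
  linear_combination (2 * (m : ℝ) + 3) * (2 * m + 5) * h₂ + (2 * (m : ℝ) + 3) * (2 * m + 6) * h₁
    + (2 * (m : ℝ) + 6) * (2 * m + 4) * h₀

lemma wallis_three_mul (k : ℕ) :
    wallis (3 * k) * (poch (1/2) k * poch (5/6) k * poch (7/6) k)
      = poch (1/3) k * poch (2/3) k * poch 1 k := by
  induction k with
  | zero => simp [poch, wallis_zero]
  | succ k ih =>
    have h := wallis_add_three (3 * k)
    rw [show 3 * (k + 1) = 3 * k + 3 by ring]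
    simp only [poch_succ]
    push_cast at h ⊢
    linear_combination poch (1/2) k * poch (5/6) k * poch (7/6) k / 216 * h
      + (6 * (k : ℝ) + 2) * (6 * k + 4) * (6 * k + 6) / 216 * ih

lemma integral_three_add_pow_four_mul_eq_wallis (m : ℕ) :
    (2 * m + 3) * (2 * m + 5) * ∫ x in (0 : ℝ)..1, (3 + x ^ 4) * (1 - x ^ 2) ^ m
      = 12 * (m + 2) ^ 2 * wallis m := by
  have hsplit : ∫ x in (0 : ℝ)..1, (3 + x ^ 4) * (1 - x ^ 2) ^ m
      = 4 * wallis m - 2 * wallis (m + 1) + wallis (m + 2) := by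
    have hint : ∀ n : ℕ, IntervalIntegrable (fun x : ℝ => (1 - x ^ 2) ^ n) volume 0 1 :=
      fun n => Continuous.intervalIntegrable (by fun_prop) _ _
    simp only [wallis, ← intervalIntegral.integral_const_mul,
      ← intervalIntegral.integral_sub ((hint m).const_mul 4) ((hint (m + 1)).const_mul 2),
      ← intervalIntegral.integral_add (((hint m).const_mul 4).sub ((hint (m + 1)).const_mul 2))
        (hint (m + 2))]
    congr 1 with x
    ring
  have h₀ := wallis_succ m
  have h₁ := wallis_succ (m + 1)
  push_cast at h₁
  rw [hsplit]
  linear_combination (-(2 * (m : ℝ) + 6)) * h₀ + (2 * (m : ℝ) + 3) * h₁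

lemma poch_ratio_eq_wallis (k : ℕ) :
    poch 1 k * poch (1/3) k * poch (5/3) k / (poch (3/2) k * poch (7/6) k * poch (11/6) k)
      = 5 * (3 * k + 2) / (2 * (2 * k + 1) * (6 * k + 5)) * wallis (3 * k) := by
  have h₁ := mul_poch_add_one (2/3) k
  have h₂ := mul_poch_add_one (1/2) k
  have h₃ := mul_poch_add_one (5/6) k
  norm_num at h₁ h₂ h₃
  rw [show poch (5/3) k = 3/2 * (poch (2/3) k * (2/3 + k)) by rw [← h₁]; ring,
    show poch (3/2) k = 2 * (poch (1/2) k * (1/2 + k)) by rw [← h₂]; ring,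
    show poch (11/6) k = 6/5 * (poch (5/6) k * (5/6 + k)) by rw [← h₃]; ring]
  have := poch_pos (by norm_num : (0 : ℝ) < 1/2) k
  have := poch_pos (by norm_num : (0 : ℝ) < 5/6) k
  have := poch_pos (by norm_num : (0 : ℝ) < 7/6) k
  field_simp
  linear_combination (-(3 * (k : ℝ) + 2) * (2 * k + 1) * (6 * k + 5)) * wallis_three_mul k

lemma term_eq_integral (k : ℕ) :
    poch 1 k * poch (1/3) k * poch (5/3) k / (poch (3/2) k * poch (7/6) k * poch (11/6) k)
        * (3 * (k : ℝ) + 2) / 4 ^ k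
      = 5 / 8 * ∫ x in (0 : ℝ)..1, (3 + x ^ 4) * ((1 - x ^ 2) ^ 3 / 4) ^ k := by
  have hJ := integral_three_add_pow_four_mul_eq_wallis (3 * k)
  have hpow : ∀ x : ℝ, (3 + x ^ 4) * ((1 - x ^ 2) ^ 3 / 4) ^ k
      = (3 + x ^ 4) * (1 - x ^ 2) ^ (3 * k) / 4 ^ k := fun x => by
    rw [div_pow, pow_mul]; ring
  simp only [hpow, intervalIntegral.integral_div, poch_ratio_eq_wallis]
  push_cast at hJ
  field_simp
  linear_combination (-2/3) * hJ

lemma hasSum_intervalIntegral_mul_geometric {f g : ℝ → ℝ} {a b r : ℝ}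
    (hf : IntervalIntegrable f volume a b) (hg : Continuous g) (hr₀ : 0 ≤ r) (hr : r < 1)
    (hgr : ∀ x ∈ Set.uIoc a b, |g x| ≤ r) :
    HasSum (fun n : ℕ => ∫ x in a..b, f x * g x ^ n) (∫ x in a..b, f x * (1 - g x)⁻¹) := by
  refine intervalIntegral.hasSum_integral_of_dominated_convergence (fun n x => ‖f x‖ * r ^ n)
    (fun n => (intervalIntegrable_iff.mp hf).aestronglyMeasurable.mul
      (hg.pow n).aestronglyMeasurable) (fun n => ae_of_all _ fun x hx => ?_)
    (ae_of_all _ fun x _ => (summable_geometric_of_lt_one hr₀ hr).mul_left _) ?_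
    (ae_of_all _ fun x hx => (hasSum_geometric_of_abs_lt_one ((hgr x hx).trans_lt hr)).mul_left _)
  · rw [norm_mul, norm_pow, Real.norm_eq_abs (g x)]
    gcongr
    exact hgr x hx
  · simp only [tsum_mul_left, tsum_geometric_of_lt_one hr₀ hr]
    exact hf.norm.mul_const _

lemma integral_three_add_pow_four_mul_inv :
    ∫ x in (0 : ℝ)..1, (3 + x ^ 4) * (1 - (1 - x ^ 2) ^ 3 / 4)⁻¹ = 2 * π / √3 := by
  have hs₀ : 0 < √3 := by positivity
  have hs : √3 ^ 2 = 3 := Real.sq_sqrt (by norm_num)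
  have hq : ∀ x : ℝ, (1 - x ^ 2) ^ 3 ≤ 1 := fun x => by
    nlinarith [sq_nonneg x, mul_nonneg (sq_nonneg x) (sq_nonneg (x ^ 2 - 3 / 2))]
  set F : ℝ → ℝ := fun t => 4 / √3 * arctan ((3 * t - t ^ 3) / (√3 * (1 - t ^ 2))) with hF
  have hderiv : ∀ x ∈ Set.Ioo (0 : ℝ) 1,
      HasDerivAt F ((3 + x ^ 4) * (1 - (1 - x ^ 2) ^ 3 / 4)⁻¹) x := by
    intro x ⟨hx₀, hx₁⟩
    have hx : 1 - x ^ 2 ≠ 0 := by nlinarith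
    have hqx := hq x
    have hnum := ((hasDerivAt_id' x).const_mul 3).fun_sub (hasDerivAt_pow 3 x)
    have hden := ((hasDerivAt_pow 2 x).const_sub 1).const_mul √3
    refine ((hnum.fun_div hden (by positivity)).arctan.const_mul (4 / √3)).congr_deriv ?_
    have hD : 4 - (1 - x ^ 2) ^ 3 ≠ 0 := by linarith
    simp only [Nat.cast_ofNat, div_pow, mul_pow, hs]
    field_simp
    ring
  have hint : IntervalIntegrable (fun x : ℝ => (3 + x ^ 4) * (1 - (1 - x ^ 2) ^ 3 / 4)⁻¹)
      volume 0 1 :=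
    (Continuous.intervalIntegrable (by fun_prop (disch := intro x; linarith [hq x])) _ _)
  have h₀ : Tendsto F (𝓝[>] 0) (𝓝 0) := by
    have : ContinuousAt F 0 := by simp only [hF]; fun_prop (disch := norm_num)
    simpa [hF] using this.tendsto.mono_left nhdsWithin_le_nhds
  have h₁ : Tendsto F (𝓝[<] 1) (𝓝 (4 / √3 * (π / 2))) := by
    have hnum : Tendsto (fun t : ℝ => 3 * t - t ^ 3) (𝓝[<] 1) (𝓝 2) := by
      have : Continuous (fun t : ℝ => 3 * t - t ^ 3) := by fun_prop
      convert (this.tendsto 1).mono_left nhdsWithin_le_nhds using 2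
      norm_num
    have hden : Tendsto (fun t : ℝ => √3 * (1 - t ^ 2)) (𝓝[<] 1) (𝓝[>] 0) := by
      refine tendsto_nhdsWithin_iff.mpr ⟨?_, ?_⟩
      · have : Continuous (fun t : ℝ => √3 * (1 - t ^ 2)) := by fun_prop
        simpa using (this.tendsto 1).mono_left nhdsWithin_le_nhds
      · filter_upwards [Ioo_mem_nhdsLT (zero_lt_one' ℝ)] with t ⟨ht₀, ht₁⟩
        have : 0 < 1 - t ^ 2 := by nlinarith
        exact mul_pos hs₀ this
    have hquot := hnum.pos_mul_atTop two_pos hden.inv_tendsto_nhdsGT_zero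
    exact ((tendsto_arctan_atTop.mono_right nhdsWithin_le_nhds).comp hquot).const_mul _
  rw [intervalIntegral.integral_eq_sub_of_hasDerivAt_of_tendsto zero_lt_one hderiv hint h₀ h₁]
  ring

theorem stmt10 :
    Tendsto (fun N => ∑ k ∈ range N,
      poch 1 k * poch (1/3) k * poch (5/3) k / (poch (3/2) k * poch (7/6) k * poch (11/6) k) * (3 * (k : ℝ) + 2) / 4 ^ k)
      atTop (nhds (5 * Real.pi / (4 * Real.sqrt 3))) := by
  have hg : ∀ x ∈ Set.uIoc (0 : ℝ) 1, |(1 - x ^ 2) ^ 3 / 4| ≤ 1 / 4 := by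
    intro x hx
    rw [Set.uIoc_of_le zero_le_one] at hx
    have h₀ : 0 ≤ 1 - x ^ 2 := by nlinarith [hx.1, hx.2]
    have h₁ : (1 - x ^ 2) ^ 3 ≤ 1 := pow_le_one₀ h₀ (by nlinarith)
    rw [abs_of_nonneg (by positivity)]
    linarith
  have hsum := (hasSum_intervalIntegral_mul_geometric (f := fun x : ℝ => 3 + x ^ 4)
    (Continuous.intervalIntegrable (by fun_prop) _ _) (by fun_prop) (by norm_num) (by norm_num)
    hg).mul_left (5 / 8)
  rw [integral_three_add_pow_four_mul_inv] at hsum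
  rw [show 5 * π / (4 * √3) = 5 / 8 * (2 * π / √3) by ring]
  simpa only [term_eq_integral] using hsum.tendsto_sum_nat
end
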